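/- arXiv:2602.19879 — 4 statements merged into one kernel-verified Lean document; each statement's English description precedes it below -/
import Mathlib

section
/- The canonical merge plan of a connected edge-weighted graph G with terminal set R has value equal to half the cost of a minimum spanning tree on the terminals, i.e. value(M) = TMST/2, where TMST is the minimum cost of a spanning tree on R in the metric closure of G. -/
/-
For `t > 0` the partition of the canonical merge plan at time `t` consists of the connected
components of the threshold graph `H_t` joining two terminals when half their distance is `< t`,
so the value is `∫₀^∞ (κ(H_t) - 1) dt`, where `κ` counts components. For every spanning tree `T`,
adding the edges of `T` of weight `u = dist / 2` at least `t` to `H_t` connects it, hence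
`κ(H_t) - 1 ≤ #{e ∈ T | t ≤ u e}`, and integrating over `t` (layer cake) bounds the value by
`u(T)`. Kruskal's tree attains equality for every `t`, because its edges of weight `< t` form a
spanning forest of `H_t`.
-/

/-- A merge plan on a terminal set `R`: a family of partitions of `R`
(given as setoids, one for each time `t : ℝ`) such that two distinct
terminals `x, y` lie in different parts of the partition at time `t`
if and only if `0 ≤ t ≤ mergeTime x y`. -/
structure MergePlan (R : Type*) where
  rel : ℝ → Setoid R
  mergeTime : R → R → ℝ
  mergeTime_self : ∀ x : R, mergeTime x x = 0
  mergeTime_nonneg : ∀ x y : R, x ≠ y → 0 ≤ mergeTime x y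
  rel_iff : ∀ (t : ℝ) (x y : R), x ≠ y →
    (¬ (rel t).r x y ↔ 0 ≤ t ∧ t ≤ mergeTime x y)

/-- The local value of a merge plan for a terminal set `X`:
`∫_0^∞ (|{parts meeting X}| - 1) dt`. -/
noncomputable def MergePlan.localValue {R : Type*} (M : MergePlan R) (X : Set R) : ℝ :=
  ∫ t in Set.Ioi (0 : ℝ),
    ((Set.ncard (Quotient.mk (M.rel t) '' X) : ℝ) - 1)

/-- The value of a merge plan: `∫_0^∞ (|S^t| - 1) dt`. -/
noncomputable def MergePlan.value {R : Type*} (M : MergePlan R) : ℝ :=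
  M.localValue Set.univ
/-- `minimax u x y` is the minimum over `x`-`y` paths `P` in the complete graph on `R`
of the maximum of `u` over the edges of `P`. Paths are encoded as lists of vertices with
distinct consecutive entries. -/
noncomputable def minimax {R : Type*} (u : Sym2 R → ℝ) (x y : R) : ℝ :=
  sInf {m : ℝ | ∃ l : List R,
    List.Chain' (fun a b => a ≠ b) (x :: l) ∧
    (x :: l).getLast (List.cons_ne_nil x l) = y ∧
    m = (((x :: l).zip l).map fun p => u s(p.1, p.2)).foldr max 0}
/-- The minimum cost of a spanning tree of the complete graph on `R`
with respect to the edge costs `u`. -/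
noncomputable def mstCost {R : Type*} (u : Sym2 R → ℝ) : ℝ :=
  sInf {w : ℝ | ∃ T : Finset (Sym2 R), (∀ e ∈ T, ¬ e.IsDiag) ∧
    (SimpleGraph.fromEdgeSet (↑T : Set (Sym2 R))).Connected ∧
    T.card + 1 = Nat.card R ∧ w = ∑ e ∈ T, u e}
/-- Shortest-path distance in the weighted graph `(G, c)`, as a function on unordered pairs. -/
noncomputable def wdist {V : Type*} (G : SimpleGraph V) (c : Sym2 V → ℝ) : Sym2 V → ℝ :=
  Sym2.lift ⟨fun x y => sInf {d : ℝ |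
      (∃ p : G.Walk x y, d = (p.edges.map c).sum) ∨
      (∃ p : G.Walk y x, d = (p.edges.map c).sum)},
    fun x y => congrArg sInf (Set.ext fun _ => or_comm)⟩

/-- The metric closure of `(G, c)` restricted to a terminal set `R`. -/
noncomputable def restrictDist {V : Type*} (G : SimpleGraph V) (c : Sym2 V → ℝ)
    (R : Finset V) : Sym2 {v : V // v ∈ R} → ℝ :=
  Sym2.lift ⟨fun a b => wdist G c s((a : V), (b : V)), fun a b => by show wdist G c s((a : V), (b : V)) = wdist G c s((b : V), (a : V)); rw [Sym2.eq_swap]⟩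

open SimpleGraph
open scoped Finset

section LayerCake
open MeasureTheory Set Finset
variable {ι : Type*} (T : Finset ι) (u : ι → ℝ)

lemma integrableOn_Ioi_indicator_Iic (a : ℝ) :
    IntegrableOn ((Iic a).indicator (1 : ℝ → ℝ)) (Ioi 0) := by
  rw [IntegrableOn, integrable_indicator_iff measurableSet_Iic, IntegrableOn,
    Measure.restrict_restrict measurableSet_Iic, inter_comm, Ioi_inter_Iic]
  exact integrableOn_const measure_Ioc_lt_top.ne

lemma setIntegral_Ioi_indicator_Iic {a : ℝ} (ha : 0 ≤ a) :
    ∫ t in Ioi 0, (Iic a).indicator (1 : ℝ → ℝ) t = a := by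
  rw [setIntegral_indicator measurableSet_Iic, Ioi_inter_Iic]
  simp [Real.volume_real_Ioc_of_le ha]

lemma card_filter_le_eq_sum_indicator (t : ℝ) :
    (#{e ∈ T | t ≤ u e} : ℝ) = ∑ e ∈ T, (Iic (u e)).indicator (1 : ℝ → ℝ) t := by
  rw [card_filter]
  push_cast
  simp only [indicator_apply, Set.mem_Iic, Pi.one_apply]

lemma integrableOn_card_filter_le :
    IntegrableOn (fun t => (#{e ∈ T | t ≤ u e} : ℝ)) (Ioi 0) := by
  simp_rw [card_filter_le_eq_sum_indicator]
  exact integrable_finsetSum T fun e _ => integrableOn_Ioi_indicator_Iic (u e)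

lemma setIntegral_card_filter_le (hu : ∀ e ∈ T, 0 ≤ u e) :
    ∫ t in Ioi 0, (#{e ∈ T | t ≤ u e} : ℝ) = ∑ e ∈ T, u e := by
  simp_rw [card_filter_le_eq_sum_indicator]
  rw [integral_finsetSum T fun e _ => integrableOn_Ioi_indicator_Iic (u e)]
  exact Finset.sum_congr rfl fun e he => setIntegral_Ioi_indicator_Iic (hu e he)

end LayerCake

theorem List.le_foldr_max {α : Type*} [LinearOrder α] (b : α) (l : List α) :
    b ≤ l.foldr max b := by
  induction l with
  | nil => exact le_rfl
  | cons a l ih => exact le_max_of_le_right ih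

section Minimax
variable {α : Type*}

lemma foldr_max_zip_lt_and_isChain_ne_iff (u : Sym2 α → ℝ) (t : ℝ) (x : α) (l : List α) :
    (((x :: l).zip l).map fun p => u s(p.1, p.2)).foldr max 0 < t ∧
        (x :: l).IsChain (· ≠ ·) ↔
      0 < t ∧ (x :: l).IsChain (fromEdgeSet {e | u e < t}).Adj := by
  induction l generalizing x with
  | nil => simp
  | cons z l ih =>
    simp only [List.zip_cons_cons, List.map_cons, List.foldr_cons, max_lt_iff,
      List.isChain_cons_cons, fromEdgeSet_adj, Set.mem_ofPred_eq]
    grind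

lemma minimax_lt_iff_reachable (u : Sym2 α → ℝ) {t : ℝ} (ht : 0 < t) (x y : α) :
    minimax u x y < t ↔ (fromEdgeSet {e | u e < t}).Reachable x y := by
  rw [reachable_iff_reflTransGen]
  unfold minimax
  constructor
  · intro h
    by_cases hxy : x = y
    · exact hxy ▸ .refl
    obtain ⟨m, ⟨l, hne, hlast, rfl⟩, hm⟩ :=
      exists_lt_of_csInf_lt (by exact ⟨_, [y], List.isChain_pair.mpr hxy, rfl, rfl⟩) h
    exact List.relationReflTransGen_of_exists_isChain_cons l
      ((foldr_max_zip_lt_and_isChain_ne_iff u t x l).1 ⟨hm, hne⟩).2 hlast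
  · intro h
    obtain ⟨l, hl, hlast⟩ := List.exists_isChain_cons_of_relationReflTransGen h
    obtain ⟨hlt, hne⟩ := (foldr_max_zip_lt_and_isChain_ne_iff u t x l).2 ⟨ht, hl⟩
    refine (csInf_le ?_ (by exact ⟨l, hne, hlast, rfl⟩)).trans_lt hlt
    exact ⟨0, by rintro _ ⟨l, -, -, rfl⟩; exact List.le_foldr_max _ _⟩

end Minimax

namespace SimpleGraph
variable {V : Type*} {G G' : SimpleGraph V} {x y a b : V}

lemma Reachable.of_sup_edge (h : (G ⊔ edge x y).Reachable a b) :
    G.Reachable a b ∨ (G.Reachable a x ∧ G.Reachable y b) ∨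
      (G.Reachable a y ∧ G.Reachable x b) := by
  rw [reachable_iff_reflTransGen] at h
  induction h with
  | refl => exact .inl .rfl
  | @tail c d _ hcd ih =>
    rcases (sup_adj _ _ _ _).1 hcd with hcd | hcd
    · have hcd := hcd.reachable
      rcases ih with h | ⟨h₁, h₂⟩ | ⟨h₁, h₂⟩
      · exact .inl (h.trans hcd)
      · exact .inr (.inl ⟨h₁, h₂.trans hcd⟩)
      · exact .inr (.inr ⟨h₁, h₂.trans hcd⟩)
    · obtain ⟨⟨rfl, rfl⟩ | ⟨rfl, rfl⟩, -⟩ := (edge_adj _ _ _ _).1 hcd <;>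
        rcases ih with h | ⟨h, -⟩ | ⟨h, -⟩ <;> simp [h]

lemma reachable_sup_edge_eq (h : G.Reachable x y) : (G ⊔ edge x y).Reachable = G.Reachable := by
  ext a b
  refine ⟨fun hab => ?_, fun hab => hab.mono le_sup_left⟩
  rcases hab.of_sup_edge with hab | ⟨h₁, h₂⟩ | ⟨h₁, h₂⟩
  exacts [hab, h₁.trans (h.trans h₂), h₁.trans (h.symm.trans h₂)]

lemma reachable_sup_eq_of_reachable_eq (h : G.Reachable = G'.Reachable) (H : SimpleGraph V) :
    (G ⊔ H).Reachable = (G' ⊔ H).Reachable := by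
  suffices key : ∀ {G G' : SimpleGraph V}, G.Reachable = G'.Reachable →
      ∀ a b, (G ⊔ H).Reachable a b → (G' ⊔ H).Reachable a b by
    ext a b; exact ⟨key h a b, key h.symm a b⟩
  intro G G' h a b hab
  rw [reachable_iff_reflTransGen] at hab
  induction hab with
  | refl => exact .rfl
  | tail _ hcd ih =>
    refine ih.trans ?_
    rcases (sup_adj _ _ _ _).1 hcd with hcd | hcd
    · exact (h ▸ hcd.reachable).mono le_sup_left
    · exact hcd.reachable.mono le_sup_right

lemma fromEdgeSet_insert [DecidableEq V] (F : Finset (Sym2 V)) (x y : V) :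
    fromEdgeSet ↑(insert s(x, y) F) = fromEdgeSet ↑F ⊔ edge x y := by
  rw [Finset.coe_insert, Set.insert_eq, fromEdgeSet_union, sup_comm, edge]

lemma card_connectedComponent_bot :
    Nat.card (⊥ : SimpleGraph V).ConnectedComponent = Nat.card V :=
  Nat.card_congr (Equiv.ofBijective _
    ⟨fun _ _ h => reachable_bot.1 (ConnectedComponent.eq.1 h), Quot.mk_surjective⟩).symm

lemma card_connectedComponent_eq_of_reachable_eq (h : G.Reachable = G'.Reachable) :
    Nat.card G.ConnectedComponent = Nat.card G'.ConnectedComponent := by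
  unfold ConnectedComponent
  rw [h]

lemma Connected.card_connectedComponent_eq_one (h : G.Connected) :
    Nat.card G.ConnectedComponent = 1 :=
  Nat.card_eq_one_iff_unique.2
    ⟨h.preconnected.subsingleton_connectedComponent,
      ⟨G.connectedComponentMk h.nonempty.some⟩⟩

variable [Finite V]

lemma card_connectedComponent_le_sup_edge_add_one (G : SimpleGraph V) (x y : V) :
    Nat.card G.ConnectedComponent ≤ Nat.card (G ⊔ edge x y).ConnectedComponent + 1 := by
  classical
  let φ := ConnectedComponent.map (Hom.ofLE (le_sup_left : G ≤ G ⊔ edge x y))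
  let g (c : G.ConnectedComponent) : Option (G ⊔ edge x y).ConnectedComponent :=
    if c = G.connectedComponentMk x then none else some (φ c)
  -- only the components of `x` and `y` can merge
  have hg : Function.Injective g := by
    refine ConnectedComponent.ind₂ fun a b hab => ?_
    simp only [g] at hab
    split_ifs at hab with ha hb hb
    · exact ha.trans hb.symm
    rw [Option.some_inj] at hab
    simp only [φ, ConnectedComponent.map_mk, ConnectedComponent.eq] at ha hb hab ⊢
    rcases hab.of_sup_edge with hab | ⟨h₁, -⟩ | ⟨-, h₂⟩
    exacts [hab, absurd h₁ ha, absurd h₂.symm hb]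
  simpa [Finite.card_option] using Nat.card_le_card_of_injective g hg

lemma card_connectedComponent_sup_edge_lt (h : ¬G.Reachable x y) :
    Nat.card (G ⊔ edge x y).ConnectedComponent < Nat.card G.ConnectedComponent := by
  refine lt_of_le_of_ne (ConnectedComponent.card_le_card_of_le le_sup_left) fun hcard => h ?_
  have hbij := (ConnectedComponent.surjective_map_ofLE (le_sup_left : G ≤ G ⊔ edge x y))
    |>.bijective_of_nat_card_le hcard.ge
  have hxy : x ≠ y := by rintro rfl; exact h .rfl
  refine ConnectedComponent.eq.1 (hbij.1 (ConnectedComponent.eq.2 ?_))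
  exact ((edge_adj ..).2 ⟨.inl ⟨rfl, rfl⟩, hxy⟩).reachable.mono le_sup_right

lemma card_connectedComponent_le_sup_fromEdgeSet_add_card (G : SimpleGraph V)
    (S : Finset (Sym2 V)) :
    Nat.card G.ConnectedComponent ≤
      Nat.card (G ⊔ fromEdgeSet ↑S).ConnectedComponent + #S := by
  classical
  induction S using Finset.induction_on with
  | empty => simp
  | insert e S heS ih =>
    induction e using Sym2.ind with
    | _ x y =>
    have := card_connectedComponent_le_sup_edge_add_one (G ⊔ fromEdgeSet ↑S) x y
    rw [fromEdgeSet_insert, ← sup_assoc, Finset.card_insert_of_notMem heS]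
    omega

lemma card_connectedComponent_fromEdgeSet_add_card_mono {F T : Finset (Sym2 V)} (h : F ⊆ T) :
    Nat.card (fromEdgeSet (F : Set (Sym2 V))).ConnectedComponent + #F ≤
      Nat.card (fromEdgeSet (T : Set (Sym2 V))).ConnectedComponent + #T := by
  classical
  have := card_connectedComponent_le_sup_fromEdgeSet_add_card (fromEdgeSet ↑F) (T \ F)
  rw [← fromEdgeSet_union, ← Finset.coe_union, Finset.union_sdiff_of_subset h,
    Finset.card_sdiff_of_subset h] at this
  have := Finset.card_le_card h
  omega

lemma card_le_card_connectedComponent_fromEdgeSet_add_card (F : Finset (Sym2 V)) :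
    Nat.card V ≤ Nat.card (fromEdgeSet (F : Set (Sym2 V))).ConnectedComponent + #F := by
  simpa [fromEdgeSet_empty, card_connectedComponent_bot] using
    card_connectedComponent_fromEdgeSet_add_card_mono F.empty_subset

end SimpleGraph

section Kruskal
variable {V : Type*} [Finite V] [DecidableEq V]
open Finset

-- `κ(T) + #T = |V|`, with `κ` the number of components, says that `T` is a forest.
theorem exists_forest_reachable_filter_lt_eq (u : Sym2 V → ℝ) (S : Finset (Sym2 V)) :
    ∃ T ⊆ S, (∀ e ∈ T, ¬e.IsDiag) ∧
      Nat.card (fromEdgeSet (T : Set (Sym2 V))).ConnectedComponent + #T = Nat.card V ∧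
      ∀ t, (fromEdgeSet (↑{e ∈ T | u e < t} : Set (Sym2 V))).Reachable =
        (fromEdgeSet (↑{e ∈ S | u e < t} : Set (Sym2 V))).Reachable := by
  -- Kruskal: the edges of `S` are inserted by increasing weight
  induction S using Finset.induction_on_max_value u with
  | empty =>
    exact ⟨∅, subset_rfl, by simp, by simp [fromEdgeSet_empty, card_connectedComponent_bot],
      fun _ => rfl⟩
  | insert a S haS hmax ih =>
    obtain ⟨T, hTS, hdiag, hcard, hreach⟩ := ih
    induction a using Sym2.ind with | _ x y =>
    have hfilter (X : Finset (Sym2 V)) (t : ℝ) :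
        fromEdgeSet (↑{e ∈ insert s(x, y) X | u e < t} : Set (Sym2 V)) =
          if u s(x, y) < t then fromEdgeSet (↑{e ∈ X | u e < t} : Set (Sym2 V)) ⊔ edge x y
          else fromEdgeSet (↑{e ∈ X | u e < t} : Set (Sym2 V)) := by
      rw [filter_insert]; split_ifs <;> simp only [fromEdgeSet_insert]
    by_cases hxy : (fromEdgeSet (T : Set (Sym2 V))).Reachable x y
    · refine ⟨T, hTS.trans (subset_insert _ _), hdiag, hcard, fun t => ?_⟩
      rw [hreach t, hfilter S t]
      split_ifs with ht
      · have hT : {e ∈ T | u e < t} = T :=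
          filter_true_of_mem fun e he => (hmax e (hTS he)).trans_lt ht
        have hxyS : (fromEdgeSet (↑{e ∈ S | u e < t} : Set (Sym2 V))).Reachable x y := by
          rwa [← hreach t, hT]
        rw [reachable_sup_edge_eq hxyS]
      · rfl
    · have hne : x ≠ y := by rintro rfl; exact hxy .rfl
      have haT : s(x, y) ∉ T := fun h => haS (hTS h)
      refine ⟨insert s(x, y) T, insert_subset_insert _ hTS, ?_, ?_, fun t => ?_⟩
      · simpa [hne] using hdiag
      · have hlt := card_connectedComponent_sup_edge_lt hxy
        have hge := card_le_card_connectedComponent_fromEdgeSet_add_card (insert s(x, y) T)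
        rw [fromEdgeSet_insert, card_insert_of_notMem haT] at hge ⊢
        omega
      · rw [hfilter, hfilter]
        split_ifs
        · exact reachable_sup_eq_of_reachable_eq (hreach t) _
        · exact hreach t

end Kruskal

section Threshold
variable {V : Type*}
open Finset MeasureTheory

theorem card_connectedComponent_le_card_filter_le_add_one [Finite V] (u : Sym2 V → ℝ)
    {T : Finset (Sym2 V)} (hT : (fromEdgeSet (T : Set (Sym2 V))).Connected) (t : ℝ) :
    Nat.card (fromEdgeSet {e | u e < t}).ConnectedComponent ≤ #{e ∈ T | t ≤ u e} + 1 := by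
  have hle : fromEdgeSet (T : Set (Sym2 V)) ≤
      fromEdgeSet {e | u e < t} ⊔ fromEdgeSet (↑{e ∈ T | t ≤ u e} : Set (Sym2 V)) := by
    rw [← fromEdgeSet_union]
    refine fromEdgeSet_mono fun e (he : e ∈ T) => ?_
    simpa [he] using lt_or_ge (u e) t
  calc _ ≤ Nat.card (fromEdgeSet {e | u e < t} ⊔
          fromEdgeSet (↑{e ∈ T | t ≤ u e} : Set (Sym2 V))).ConnectedComponent +
          #{e ∈ T | t ≤ u e} :=
        card_connectedComponent_le_sup_fromEdgeSet_add_card _ _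
    _ ≤ Nat.card (fromEdgeSet (T : Set (Sym2 V))).ConnectedComponent + #{e ∈ T | t ≤ u e} :=
        Nat.add_le_add_right (ConnectedComponent.card_le_card_of_le hle) _
    _ = _ := by rw [hT.card_connectedComponent_eq_one, add_comm]

theorem exists_spanningTree_card_connectedComponent_eq [Finite V] [Nonempty V]
    (u : Sym2 V → ℝ) :
    ∃ T : Finset (Sym2 V), (∀ e ∈ T, ¬e.IsDiag) ∧
      (fromEdgeSet (T : Set (Sym2 V))).Connected ∧ #T + 1 = Nat.card V ∧
      ∀ t, Nat.card (fromEdgeSet {e | u e < t}).ConnectedComponent =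
        #{e ∈ T | t ≤ u e} + 1 := by
  classical
  have := Fintype.ofFinite V
  obtain ⟨T, -, hdiag, hcard, hreach⟩ := exists_forest_reachable_filter_lt_eq u univ
  simp only [coe_filter_univ] at hreach
  obtain ⟨b, hb⟩ := (Set.finite_range u).bddAbove
  have hconn : (fromEdgeSet (T : Set (Sym2 V))).Connected := by
    have hT : {e ∈ T | u e < b + 1} = T :=
      filter_true_of_mem fun e _ => (hb ⟨e, rfl⟩).trans_lt (lt_add_one b)
    have htop : {e | u e < b + 1} = Set.univ :=
      Set.eq_univ_of_forall fun e => (hb ⟨e, rfl⟩).trans_lt (lt_add_one b)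
    rw [connected_iff, preconnected_iff_reachable_eq_top, ← hT, hreach, htop, fromEdgeSet_univ,
      ← preconnected_iff_reachable_eq_top]
    exact ⟨(connected_top_iff.2 ‹_›).preconnected, ‹_›⟩
  refine ⟨T, hdiag, hconn, by rw [← hcard, hconn.card_connectedComponent_eq_one, add_comm],
    fun t => ?_⟩
  -- `{e ∈ T | u e < t}` is a spanning forest of the threshold graph
  rw [← card_connectedComponent_eq_of_reachable_eq (hreach t)]
  have hsub := card_connectedComponent_fromEdgeSet_add_card_mono (filter_subset (u · < t) T)
  have hlow := card_le_card_connectedComponent_fromEdgeSet_add_card {e ∈ T | u e < t}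
  have hsplit := card_filter_add_card_filter_not (s := T) (u · < t)
  simp only [not_lt] at hsplit
  have hone := hconn.card_connectedComponent_eq_one
  omega

theorem setIntegral_card_connectedComponent_sub_one {u : Sym2 V → ℝ} {T : Finset (Sym2 V)}
    (hu : ∀ e, 0 ≤ u e)
    (hT : ∀ t, Nat.card (fromEdgeSet {e | u e < t}).ConnectedComponent =
      #{e ∈ T | t ≤ u e} + 1) :
    ∫ t in Set.Ioi 0, ((Nat.card (fromEdgeSet {e | u e < t}).ConnectedComponent : ℝ) - 1) =
      ∑ e ∈ T, u e := by
  simp only [hT, Nat.cast_add, Nat.cast_one, add_sub_cancel_right]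
  exact setIntegral_card_filter_le T u fun e _ => hu e

theorem sum_le_sum_of_card_connectedComponent_eq [Finite V] {u : Sym2 V → ℝ}
    {T T' : Finset (Sym2 V)} (hu : ∀ e, 0 ≤ u e)
    (hT : ∀ t, Nat.card (fromEdgeSet {e | u e < t}).ConnectedComponent =
      #{e ∈ T | t ≤ u e} + 1)
    (hT' : (fromEdgeSet (T' : Set (Sym2 V))).Connected) :
    ∑ e ∈ T, u e ≤ ∑ e ∈ T', u e := by
  rw [← setIntegral_card_filter_le T u fun e _ => hu e,
    ← setIntegral_card_filter_le T' u fun e _ => hu e]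
  refine setIntegral_mono_on (integrableOn_card_filter_le T u) (integrableOn_card_filter_le T' u)
    measurableSet_Ioi fun t _ => ?_
  have := card_connectedComponent_le_card_filter_le_add_one u hT' t
  rw [hT t] at this
  exact_mod_cast Nat.le_of_add_le_add_right this

end Threshold

lemma mstCost_eq_sum {R : Type*} {d : Sym2 R → ℝ} {T : Finset (Sym2 R)}
    (hdiag : ∀ e ∈ T, ¬e.IsDiag) (hconn : (fromEdgeSet (T : Set (Sym2 R))).Connected)
    (hcard : #T + 1 = Nat.card R)
    (hmin : ∀ T' : Finset (Sym2 R), (fromEdgeSet (T' : Set (Sym2 R))).Connected →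
      ∑ e ∈ T, d e ≤ ∑ e ∈ T', d e) :
    mstCost d = ∑ e ∈ T, d e :=
  IsLeast.csInf_eq ⟨⟨T, hdiag, hconn, hcard, rfl⟩, by
    rintro _ ⟨T', -, hT', -, rfl⟩
    exact hmin T' hT'⟩

namespace MergePlan
variable {R : Type*} (M : MergePlan R) {u : Sym2 R → ℝ}

lemma rel_eq_reachableSetoid (hM : ∀ x y, x ≠ y → M.mergeTime x y = minimax u x y) {t : ℝ}
    (ht : 0 < t) : M.rel t = (fromEdgeSet {e | u e < t}).reachableSetoid := by
  ext x y
  by_cases hxy : x = y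
  · subst hxy
    exact iff_of_true ((M.rel t).refl x) .rfl
  · change (M.rel t).r x y ↔ (fromEdgeSet {e | u e < t}).Reachable x y
    rw [← minimax_lt_iff_reachable u ht, ← hM x y hxy, ← not_iff_not, M.rel_iff t x y hxy]
    simp [ht.le]

lemma value_eq_setIntegral (hM : ∀ x y, x ≠ y → M.mergeTime x y = minimax u x y) :
    M.value = ∫ t in Set.Ioi 0,
      ((Nat.card (fromEdgeSet {e | u e < t}).ConnectedComponent : ℝ) - 1) := by
  refine MeasureTheory.setIntegral_congr_fun measurableSet_Ioi fun t ht => ?_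
  rw [M.rel_eq_reachableSetoid hM ht, Set.image_univ, Set.range_quotient_mk, Set.ncard_univ]
  rfl

end MergePlan

lemma wdist_nonneg {V : Type*} {G : SimpleGraph V} {c : Sym2 V → ℝ}
    (hc : ∀ e ∈ G.edgeSet, 0 < c e) (e : Sym2 V) : 0 ≤ wdist G c e := by
  induction e using Sym2.ind with | _ x y =>
  refine Real.sInf_nonneg ?_
  rintro _ (⟨p, rfl⟩ | ⟨p, rfl⟩) <;>
  · refine List.sum_nonneg fun r hr => ?_
    obtain ⟨e, he, rfl⟩ := List.mem_map.1 hr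
    exact (hc e (p.edges_subset_edgeSet he)).le

lemma restrictDist_nonneg {V : Type*} {G : SimpleGraph V} {c : Sym2 V → ℝ}
    (hc : ∀ e ∈ G.edgeSet, 0 < c e) (R : Finset V) (e : Sym2 R) :
    0 ≤ restrictDist G c R e := by
  induction e using Sym2.ind with | _ a b => exact wdist_nonneg hc s((a : V), b)

theorem canonical_mergePlan_value_eq_half_TMST_general {V : Type*}
    (G : SimpleGraph V)
    (c : Sym2 V → ℝ) (hc : ∀ e ∈ G.edgeSet, 0 < c e)
    (R : Finset V) (hR : R.Nonempty)
    (M : MergePlan {v : V // v ∈ R})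
    (hM : ∀ x y : {v : V // v ∈ R}, x ≠ y →
      M.mergeTime x y = minimax (fun e => restrictDist G c R e / 2) x y) :
    M.value = mstCost (restrictDist G c R) / 2 := by
  have := hR.to_subtype
  set d := restrictDist G c R
  have hu (e : Sym2 R) : 0 ≤ d e / 2 := div_nonneg (restrictDist_nonneg hc R e) zero_le_two
  obtain ⟨T, hdiag, hconn, hcard, hcomp⟩ :=
    exists_spanningTree_card_connectedComponent_eq fun e => d e / 2
  rw [M.value_eq_setIntegral hM, setIntegral_card_connectedComponent_sub_one hu hcomp,
    ← Finset.sum_div, mstCost_eq_sum hdiag hconn hcard fun T' hT' => ?_]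
  have := sum_le_sum_of_card_connectedComponent_eq hu hcomp hT'
  rwa [← Finset.sum_div, ← Finset.sum_div, div_le_div_iff_of_pos_right two_pos] at this

/-- The canonical merge plan of a connected edge-weighted graph `G`
with terminal set `R` (the merge plan whose merge times are the min-max, over terminal
paths, of half the shortest-path distance) has value `TMST / 2`, where `TMST` is the
minimum spanning tree cost on the terminals in the metric closure of `G`. -/
theorem canonical_mergePlan_value_eq_half_TMST {V : Type*} [Fintype V]
    (G : SimpleGraph V) (hG : G.Connected)
    (c : Sym2 V → ℝ) (hc : ∀ e ∈ G.edgeSet, 0 < c e)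
    (R : Finset V) (hR : R.Nonempty)
    (M : MergePlan {v : V // v ∈ R})
    (hM : ∀ x y : {v : V // v ∈ R}, x ≠ y →
      M.mergeTime x y = minimax (fun e => restrictDist G c R e / 2) x y) :
    M.value = mstCost (restrictDist G c R) / 2 :=
  canonical_mergePlan_value_eq_half_TMST_general G c hc R hR M hM
end

section
/- Let R be finite, u an upper bound, X ⊆ R nonempty, and let M_u be the merge plan attaining the min-max bound determined by u. Define the contracted upper bound u_X on R/X by u_X({a,b}) = u({a,b}) for a,b ∉ X and u_X({a, X}) = min_{x∈X} u({a,x}). Define the contracted merge plan M_u/X on R/X whose partition at time t arises from that of M_u by combining all parts intersecting X into a single part. Then M_u/X = M_{u_X}. -/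
/-- The setoid on `R` identifying all elements of `X` (and nothing else). -/
def contractSetoid {R : Type*} (X : Set R) : Setoid R where
  r a b := a = b ∨ (a ∈ X ∧ b ∈ X)
  iseqv := ⟨fun _ => Or.inl rfl,
    fun h => h.elim (fun e => Or.inl e.symm) (fun h' => Or.inr ⟨h'.2, h'.1⟩),
    fun h1 h2 => by
      rcases h1 with rfl | ⟨ha, hb⟩
      · exact h2
      · rcases h2 with rfl | ⟨_, hc⟩
        · exact Or.inr ⟨ha, hb⟩
        · exact Or.inr ⟨ha, hc⟩⟩

/-- Edge costs on the quotient of `R` by a setoid `sd`: the minimum of `d`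
over all pairs of representatives. -/
noncomputable def quotCost {R : Type*} (d : Sym2 R → ℝ) (sd : Setoid R) :
    Sym2 (Quotient sd) → ℝ :=
  fun e => sInf {v : ℝ | ∃ a b : R,
    s(Quotient.mk sd a, Quotient.mk sd b) = e ∧ v = d s(a, b)}

/-- `drop(X) = TMST - TMST_{/X}` for the terminal metric `d`. -/
noncomputable def dropCost {R : Type*} (d : Sym2 R → ℝ) (X : Set R) : ℝ :=
  mstCost d - mstCost (quotCost d (contractSetoid X))

/-! For `t > 0`, two terminals lie in one part of `M_u` at time `t` exactly when they are joined
by a path of edges `e` with `u e < t`: the parts of `M_u` at time `t` are the components of this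
threshold graph. Since `u_X` of an edge of `R/X` is the cheapest `u`-edge between the two classes,
the threshold graph of `u_X` is, up to loops, the contraction of the threshold graph of `u`, whose
components are those of the original with all components meeting `X` merged. So `M_u/X` and
`M_{u_X}` have the same partitions at all positive times, hence the same merge times. -/

open Relation

section Minimax

variable {V : Type*}

/-- The quantity minimised in `minimax`: the largest cost along the path `x :: l`, and `0` for the
trivial path. -/
def pathMax (c : Sym2 V → ℝ) (x : V) (l : List V) : ℝ :=
  (((x :: l).zip l).map fun p => c s(p.1, p.2)).foldr max 0

theorem pathMax_cons (c : Sym2 V → ℝ) (x y : V) (l : List V) :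
    pathMax c x (y :: l) = max (c s(x, y)) (pathMax c y l) :=
  rfl

theorem pathMax_nonneg (c : Sym2 V → ℝ) : ∀ (x : V) (l : List V), 0 ≤ pathMax c x l
  | _, [] => le_rfl
  | x, y :: l => (pathMax_nonneg c y l).trans (le_max_right (c s(x, y)) _)

/-- `minimax c x y` is, by definition, the infimum of this set. -/
def pathMaxValues (c : Sym2 V → ℝ) (x y : V) : Set ℝ :=
  {m | ∃ l : List V, List.IsChain (· ≠ ·) (x :: l) ∧
    (x :: l).getLast (List.cons_ne_nil x l) = y ∧ m = pathMax c x l}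

theorem pathMaxValues_nonempty (c : Sym2 V → ℝ) (x y : V) : (pathMaxValues c x y).Nonempty := by
  rcases eq_or_ne x y with rfl | hxy
  · exact ⟨_, [], List.isChain_singleton x, rfl, rfl⟩
  · exact ⟨_, [y], List.isChain_pair.mpr hxy, rfl, rfl⟩

theorem pathMaxValues_bddBelow (c : Sym2 V → ℝ) (x y : V) : BddBelow (pathMaxValues c x y) :=
  ⟨0, by rintro _ ⟨l, -, -, rfl⟩; exact pathMax_nonneg c x l⟩

theorem minimax_nonneg (c : Sym2 V → ℝ) (x y : V) : 0 ≤ minimax c x y :=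
  le_csInf (pathMaxValues_nonempty c x y) (by rintro _ ⟨l, -, -, rfl⟩; exact pathMax_nonneg c x l)

theorem minimax_le_pathMax (c : Sym2 V → ℝ) {x y : V} {l : List V}
    (hl : List.IsChain (· ≠ ·) (x :: l)) (hy : (x :: l).getLast (List.cons_ne_nil x l) = y) :
    minimax c x y ≤ pathMax c x l :=
  csInf_le (pathMaxValues_bddBelow c x y) ⟨l, hl, hy, rfl⟩

theorem reflTransGen_of_pathMax_lt (c : Sym2 V → ℝ) {y : V} {t : ℝ} :
    ∀ (x : V) (l : List V), (x :: l).getLast (List.cons_ne_nil x l) = y →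
      pathMax c x l < t → ReflTransGen (fun a b => c s(a, b) < t) x y
  | _, [], rfl, _ => .refl
  | x, w :: l, hy, hlt => by
    rw [pathMax_cons, max_lt_iff] at hlt
    exact .head hlt.1 (reflTransGen_of_pathMax_lt c w l hy hlt.2)

theorem minimax_lt_of_cost_lt_of_minimax_lt (c : Sym2 V → ℝ) {x w y : V} {t : ℝ}
    (hxw : c s(x, w) < t) (hwy : minimax c w y < t) : minimax c x y < t := by
  rcases eq_or_ne x w with rfl | hne
  · exact hwy
  obtain ⟨_, ⟨l, hl, hy, rfl⟩, hlt⟩ := exists_lt_of_csInf_lt (pathMaxValues_nonempty c w y) hwy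
  calc minimax c x y ≤ pathMax c x (w :: l) :=
        minimax_le_pathMax c (List.isChain_cons_cons.mpr ⟨hne, hl⟩) hy
    _ < t := by rw [pathMax_cons]; exact max_lt hxw hlt

theorem minimax_lt_iff (c : Sym2 V → ℝ) {x y : V} {t : ℝ} :
    minimax c x y < t ↔ 0 < t ∧ ReflTransGen (fun a b => c s(a, b) < t) x y := by
  constructor
  · intro h
    obtain ⟨_, ⟨l, -, hy, rfl⟩, hlt⟩ := exists_lt_of_csInf_lt (pathMaxValues_nonempty c x y) h
    exact ⟨(minimax_nonneg c x y).trans_lt h, reflTransGen_of_pathMax_lt c x l hy hlt⟩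
  · rintro ⟨ht, h⟩
    induction h using ReflTransGen.head_induction_on with
    | refl => exact (minimax_le_pathMax c (List.isChain_singleton y) rfl).trans_lt ht
    | head hxw _ ih => exact minimax_lt_of_cost_lt_of_minimax_lt c hxw ih

end Minimax

theorem MergePlan.rel_iff_mergeTime_lt {R : Type*} (M : MergePlan R) {t : ℝ} (ht : 0 ≤ t)
    {x y : R} (hxy : x ≠ y) : (M.rel t).r x y ↔ M.mergeTime x y < t := by
  rw [← not_iff_not, M.rel_iff t x y hxy, not_lt, and_iff_right ht]

theorem MergePlan.rel_iff_reflTransGen_of_mergeTime_eq_minimax {R : Type*} (M : MergePlan R)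
    {u : Sym2 R → ℝ} (hM : ∀ x y : R, x ≠ y → M.mergeTime x y = minimax u x y)
    {t : ℝ} (ht : 0 < t) (x y : R) :
    (M.rel t).r x y ↔ ReflTransGen (fun a b => u s(a, b) < t) x y := by
  rcases eq_or_ne x y with rfl | hxy
  · exact iff_of_true ((M.rel t).refl x) .refl
  · rw [M.rel_iff_mergeTime_lt ht.le hxy, hM x y hxy, minimax_lt_iff, and_iff_right ht]

section Contract

variable {R : Type*} {X : Set R}

local notation "π" => Quotient.mk (contractSetoid X)

theorem mk_contractSetoid_eq_iff {a b : R} : π a = π b ↔ a = b ∨ a ∈ X ∧ b ∈ X :=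
  Quotient.eq

theorem reflTransGen_map_contractSetoid_iff {r : R → R → Prop} {a b : R} :
    ReflTransGen (Relation.Map r π π) (π a) (π b) ↔
      ReflTransGen r a b ∨ (∃ x ∈ X, ReflTransGen r a x) ∧ (∃ x ∈ X, ReflTransGen r x b) := by
  have lift : ∀ {c d : R}, ReflTransGen r c d → ReflTransGen (Relation.Map r π π) (π c) (π d) :=
    fun h => h.lift π fun c d hcd => ⟨c, d, hcd, rfl, rfl⟩
  constructor
  · set S : R → Prop := fun z =>
      ReflTransGen r a z ∨ (∃ x ∈ X, ReflTransGen r a x) ∧ (∃ x ∈ X, ReflTransGen r x z)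
    have S_tail {z w : R} (hz : S z) (hzw : r z w) : S w :=
      hz.imp (·.tail hzw) fun ⟨hin, x, hx, hxz⟩ => ⟨hin, x, hx, hxz.tail hzw⟩
    have S_congr {z w : R} (hz : S z) (hzw : π z = π w) : S w := by
      rcases mk_contractSetoid_eq_iff.mp hzw with rfl | ⟨hzX, hwX⟩
      · exact hz
      refine Or.inr ⟨?_, w, hwX, .refl⟩
      exact hz.elim (fun haz => ⟨z, hzX, haz⟩) And.left
    suffices ∀ {q}, ReflTransGen (Relation.Map r π π) (π a) q → ∀ w, π w = q → S w from
      fun h => this h b rfl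
    intro q h
    induction h with
    | refl => exact fun w hw => S_congr (.inl .refl) hw.symm
    | tail _ hstep ih =>
      obtain ⟨c, d, hcd, rfl, rfl⟩ := hstep
      exact fun w hw => S_congr (S_tail (ih c rfl) hcd) hw.symm
  · rintro (h | ⟨⟨x, hx, hax⟩, ⟨y, hy, hyb⟩⟩)
    · exact lift h
    · have hxy : π x = π y := mk_contractSetoid_eq_iff.mpr (.inr ⟨hx, hy⟩)
      exact (lift hax).trans (hxy ▸ lift hyb)

end Contract

theorem finite_setOf_exists_mem_eq {R β : Type*} [Finite R] (f : R → β) (X : Set R) :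
    {v | ∃ x ∈ X, v = f x}.Finite :=
  (X.toFinite.image f).subset (by rintro _ ⟨x, hx, rfl⟩; exact ⟨x, hx, rfl⟩)

theorem exists_mem_sInf_setOf_eq {R β : Type*} [Finite R] [ConditionallyCompleteLinearOrder β]
    (f : R → β) {X : Set R} (hX : X.Nonempty) : ∃ x ∈ X, sInf {v | ∃ x ∈ X, v = f x} = f x :=
  have hne : {v | ∃ x ∈ X, v = f x}.Nonempty := hX.elim fun x hx => ⟨f x, x, hx, rfl⟩
  hne.csInf_mem (finite_setOf_exists_mem_eq f X)

/-- `uX` is the contracted cost `u_X` on `R/X`. -/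
structure IsContractedCost {R : Type*} (u : Sym2 R → ℝ) (X : Set R)
    (uX : Sym2 (Quotient (contractSetoid X)) → ℝ) : Prop where
  eq_of_not_mem : ∀ a b : R, a ∉ X → b ∉ X →
    uX s(Quotient.mk (contractSetoid X) a, Quotient.mk (contractSetoid X) b) = u s(a, b)
  eq_sInf : ∀ a : R, a ∉ X → ∀ b : R, b ∈ X →
    uX s(Quotient.mk (contractSetoid X) a, Quotient.mk (contractSetoid X) b) =
      sInf {v | ∃ x ∈ X, v = u s(a, x)}

namespace IsContractedCost

variable {R : Type*} [Finite R] {u : Sym2 R → ℝ} {X : Set R}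
  {uX : Sym2 (Quotient (contractSetoid X)) → ℝ}

local notation "π" => Quotient.mk (contractSetoid X)

theorem le (h : IsContractedCost u X uX) {a b : R} (hab : π a ≠ π b) :
    uX s(π a, π b) ≤ u s(a, b) := by
  by_cases ha : a ∈ X <;> by_cases hb : b ∈ X
  · exact absurd (mk_contractSetoid_eq_iff.mpr (.inr ⟨ha, hb⟩)) hab
  · rw [Sym2.eq_swap, h.eq_sInf b hb a ha, Sym2.eq_swap (a := a)]
    exact csInf_le (finite_setOf_exists_mem_eq _ X).bddBelow ⟨a, ha, rfl⟩
  · rw [h.eq_sInf a ha b hb]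
    exact csInf_le (finite_setOf_exists_mem_eq _ X).bddBelow ⟨b, hb, rfl⟩
  · exact (h.eq_of_not_mem a b ha hb).le

theorem exists_eq (h : IsContractedCost u X uX) {a b : R} (hab : π a ≠ π b) :
    ∃ a' b', π a' = π a ∧ π b' = π b ∧ uX s(π a, π b) = u s(a', b') := by
  by_cases ha : a ∈ X <;> by_cases hb : b ∈ X
  · exact absurd (mk_contractSetoid_eq_iff.mpr (.inr ⟨ha, hb⟩)) hab
  · obtain ⟨x, hx, hmin⟩ := exists_mem_sInf_setOf_eq (fun x => u s(b, x)) ⟨a, ha⟩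
    refine ⟨x, b, mk_contractSetoid_eq_iff.mpr (.inr ⟨hx, ha⟩), rfl, ?_⟩
    rw [Sym2.eq_swap, h.eq_sInf b hb a ha, hmin, Sym2.eq_swap]
  · obtain ⟨x, hx, hmin⟩ := exists_mem_sInf_setOf_eq (fun x => u s(a, x)) ⟨b, hb⟩
    exact ⟨a, x, rfl, mk_contractSetoid_eq_iff.mpr (.inr ⟨hx, hb⟩),
      (h.eq_sInf a ha b hb).trans hmin⟩
  · exact ⟨a, b, rfl, rfl, h.eq_of_not_mem a b ha hb⟩

theorem reflTransGen_lt_eq (h : IsContractedCost u X uX) (t : ℝ) :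
    ReflTransGen (fun p q => uX s(p, q) < t) =
      ReflTransGen (Relation.Map (fun a b => u s(a, b) < t) π π) := by
  refine le_antisymm (reflTransGen_closed ?_) (reflTransGen_closed ?_)
  · intro p q hlt
    obtain ⟨a, rfl⟩ := Quotient.exists_rep p
    obtain ⟨b, rfl⟩ := Quotient.exists_rep q
    rcases eq_or_ne (π a) (π b) with hab | hab
    · exact hab ▸ .refl
    obtain ⟨a', b', ha', hb', heq⟩ := h.exists_eq hab
    exact .single ⟨a', b', heq.symm.trans_lt hlt, ha', hb'⟩
  · rintro _ _ ⟨a, b, hlt, rfl, rfl⟩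
    rcases eq_or_ne (π a) (π b) with hab | hab
    · exact hab ▸ .refl
    exact .single ((h.le hab).trans_lt hlt)

end IsContractedCost

theorem contract_minimax_mergePlan_general {R : Type*} [Fintype R]
    (u : Sym2 R → ℝ)
    (X : Set R)
    (M : MergePlan R)
    (hM : ∀ x y : R, x ≠ y → M.mergeTime x y = minimax u x y)
    (M' : MergePlan (Quotient (contractSetoid X)))
    (hM' : ∀ t : ℝ, 0 ≤ t → ∀ a b : R,
      ((M'.rel t).r (Quotient.mk (contractSetoid X) a) (Quotient.mk (contractSetoid X) b) ↔
        ((M.rel t).r a b ∨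
          ((∃ x ∈ X, (M.rel t).r a x) ∧ (∃ x ∈ X, (M.rel t).r x b)))))
    (uX : Sym2 (Quotient (contractSetoid X)) → ℝ)
    (h1 : ∀ a b : R, a ∉ X → b ∉ X →
      uX s(Quotient.mk (contractSetoid X) a, Quotient.mk (contractSetoid X) b) = u s(a, b))
    (h2 : ∀ a : R, a ∉ X → ∀ b : R, b ∈ X →
      uX s(Quotient.mk (contractSetoid X) a, Quotient.mk (contractSetoid X) b) =
        sInf {v : ℝ | ∃ x ∈ X, v = u s(a, x)}) :
    ∀ q q' : Quotient (contractSetoid X), q ≠ q' →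
      M'.mergeTime q q' = minimax uX q q' := by
  intro q q' hqq'
  obtain ⟨a, rfl⟩ := Quotient.exists_rep q
  obtain ⟨b, rfl⟩ := Quotient.exists_rep q'
  refine eq_of_forall_gt_iff fun t => ?_
  rcases le_or_gt t 0 with ht | ht
  · exact iff_of_false (not_lt.mpr (ht.trans (M'.mergeTime_nonneg _ _ hqq')))
      (not_lt.mpr (ht.trans (minimax_nonneg uX _ _)))
  rw [← M'.rel_iff_mergeTime_lt ht.le hqq', hM' t ht.le, minimax_lt_iff, and_iff_right ht,
    IsContractedCost.reflTransGen_lt_eq ⟨h1, h2⟩, reflTransGen_map_contractSetoid_iff]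
  simp only [M.rel_iff_reflTransGen_of_mergeTime_eq_minimax hM ht]

/-- Contracting a nonempty terminal set `X` in the merge plan `M_u`
(the plan whose merge times are the min-max bound determined by `u`) yields the merge
plan `M_{u_X}` on `R/X`, where `u_X({a,b}) = u({a,b})` for `a, b ∉ X` and
`u_X({a, X}) = min_{x ∈ X} u({a,x})`. -/
theorem contract_minimax_mergePlan {R : Type*} [Fintype R]
    (u : Sym2 R → ℝ) (hu : ∀ e, 0 ≤ u e)
    (X : Set R) (hX : X.Nonempty)
    (M : MergePlan R)
    (hM : ∀ x y : R, x ≠ y → M.mergeTime x y = minimax u x y)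
    (M' : MergePlan (Quotient (contractSetoid X)))
    (hM' : ∀ t : ℝ, 0 ≤ t → ∀ a b : R,
      ((M'.rel t).r (Quotient.mk (contractSetoid X) a) (Quotient.mk (contractSetoid X) b) ↔
        ((M.rel t).r a b ∨
          ((∃ x ∈ X, (M.rel t).r a x) ∧ (∃ x ∈ X, (M.rel t).r x b)))))
    (uX : Sym2 (Quotient (contractSetoid X)) → ℝ)
    (h1 : ∀ a b : R, a ∉ X → b ∉ X →
      uX s(Quotient.mk (contractSetoid X) a, Quotient.mk (contractSetoid X) b) = u s(a, b))
    (h2 : ∀ a : R, a ∉ X → ∀ b : R, b ∈ X →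
      uX s(Quotient.mk (contractSetoid X) a, Quotient.mk (contractSetoid X) b) =
        sInf {v : ℝ | ∃ x ∈ X, v = u s(a, x)}) :
    ∀ q q' : Quotient (contractSetoid X), q ≠ q' →
      M'.mergeTime q q' = minimax uX q q' :=
  contract_minimax_mergePlan_general u X M hM M' hM' uX h1 h2
end

section
/- Let M = (S^t)_{t≥0} be a merge plan on a terminal set R, let t* ≥ 0, let S ∈ S^{t*} be a part of the partition at time t*, and let X ⊆ S and X̄ ⊆ R \ S be nonempty terminal sets. Then value(M, X ∪ X̄) ≥ value(M, X) + value(M, X̄) + t*. -/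
/-!
Up to time `t*` the sets `X` and `Y` meet disjoint families of parts (parts only merge, and `X`,
`Y` lie in different parts at time `t*`), so the integrand for `X ∪ Y` is the sum of the
integrands for `X` and `Y` plus one. After `t*` the set `X` lies in a single part, so its
integrand vanishes while that of `Y` is at most that of `X ∪ Y`. Integrating over `(0, ∞)` gives
the claim; the integrands are integrable because they are antitone and vanish once all terminals
have merged.
-/

open MeasureTheory Set

namespace Setoid

variable {α : Type*}

lemma ncard_image_mk_le_of_le [Finite α] {r s : Setoid α} (hrs : r ≤ s) (X : Set α) :
    (Quotient.mk s '' X).ncard ≤ (Quotient.mk r '' X).ncard := by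
  have hfactor : Quotient.mk s '' X =
      Quotient.lift (Quotient.mk s) (fun _ _ h => Quotient.sound (hrs h)) ''
        (Quotient.mk r '' X) := by
    rw [Set.image_image]
    rfl
  rw [hfactor]
  exact Set.ncard_image_le

lemma ncard_image_mk_eq_one (s : Setoid α) {X : Set α} (hX : X.Nonempty)
    (h : ∀ x ∈ X, ∀ y ∈ X, s.r x y) : (Quotient.mk s '' X).ncard = 1 := by
  obtain ⟨x₀, hx₀⟩ := hX
  rw [Set.ncard_eq_one]
  refine ⟨Quotient.mk s x₀, Set.eq_singleton_iff_unique_mem.mpr ⟨⟨x₀, hx₀, rfl⟩, ?_⟩⟩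
  rintro _ ⟨x, hx, rfl⟩
  exact Quotient.sound (h x hx x₀ hx₀)

lemma ncard_image_mk_union [Finite α] (s : Setoid α) {X Y : Set α}
    (h : ∀ x ∈ X, ∀ y ∈ Y, ¬ s.r x y) :
    (Quotient.mk s '' (X ∪ Y)).ncard =
      (Quotient.mk s '' X).ncard + (Quotient.mk s '' Y).ncard := by
  rw [Set.image_union]
  refine Set.ncard_union_eq (Set.disjoint_left.mpr ?_)
  rintro _ ⟨x, hx, rfl⟩ ⟨y, hy, hyx⟩
  exact h x hx y hy (Quotient.exact hyx.symm)

end Setoid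

namespace MergePlan

variable {R : Type*} (M : MergePlan R)

lemma rel_mono {s t : ℝ} (hs : 0 ≤ s) (hst : s ≤ t) : M.rel s ≤ M.rel t := by
  intro x y hxy
  by_cases hne : x = y
  · exact hne ▸ (M.rel t).refl x
  by_contra hnot
  obtain ⟨-, hmerge⟩ := (M.rel_iff t x y hne).mp hnot
  exact (M.rel_iff s x y hne).mpr ⟨hs, hst.trans hmerge⟩ hxy

lemma rel_of_mergeTime_lt {t : ℝ} {x y : R} (h : M.mergeTime x y < t) : (M.rel t).r x y := by
  by_cases hne : x = y
  · exact hne ▸ (M.rel t).refl x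
  by_contra hnot
  exact (M.rel_iff t x y hne).mp hnot |>.2.not_gt h

lemma exists_forall_rel [Finite R] : ∃ T, ∀ t, T < t → ∀ x y, (M.rel t).r x y := by
  obtain ⟨T, hT⟩ := (Set.finite_range fun p : R × R => M.mergeTime p.1 p.2).bddAbove
  exact ⟨T, fun t ht x y => M.rel_of_mergeTime_lt ((hT ⟨(x, y), rfl⟩).trans_lt ht)⟩

noncomputable def numParts (X : Set R) (t : ℝ) : ℕ :=
  (Quotient.mk (M.rel t) '' X).ncard

lemma localValue_eq (X : Set R) :
    M.localValue X = ∫ t in Ioi 0, ((M.numParts X t : ℝ) - 1) :=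
  rfl

lemma numParts_antitoneOn [Finite R] (X : Set R) : AntitoneOn (M.numParts X) (Ici 0) :=
  fun _ hs _ _ hst => Setoid.ncard_image_mk_le_of_le (M.rel_mono hs hst) X

lemma numParts_mono [Finite R] {X Y : Set R} (hXY : X ⊆ Y) (t : ℝ) :
    M.numParts X t ≤ M.numParts Y t :=
  Set.ncard_le_ncard (Set.image_mono hXY)

lemma integrableOn_numParts_sub_one [Finite R] {X : Set R} (hX : X.Nonempty) :
    IntegrableOn (fun t => (M.numParts X t : ℝ) - 1) (Ioi 0) := by
  obtain ⟨T, hT⟩ := M.exists_forall_rel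
  have hcover : Ioi (0 : ℝ) ⊆ Icc 0 T ∪ Ioi T := fun t ht =>
    (le_or_gt t T).imp (fun h => ⟨le_of_lt ht, h⟩) id
  refine IntegrableOn.mono_set (IntegrableOn.union ?_ ?_) hcover
  · refine AntitoneOn.integrableOn_isCompact isCompact_Icc fun s hs t ht hst => ?_
    simpa using M.numParts_antitoneOn X hs.1 ht.1 hst
  · refine integrableOn_zero.congr_fun (fun t ht => ?_) measurableSet_Ioi
    simp [numParts, Setoid.ncard_image_mk_eq_one _ hX fun x _ y _ => hT t ht x y]

lemma numParts_sub_one_add_le [Finite R] {τ : ℝ} (hτ : 0 ≤ τ) {X Y : Set R} (hX : X.Nonempty)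
    (hXX : ∀ x ∈ X, ∀ x' ∈ X, (M.rel τ).r x x') (hXY : ∀ x ∈ X, ∀ y ∈ Y, ¬ (M.rel τ).r x y)
    {t : ℝ} (ht : 0 < t) :
    ((M.numParts X t : ℝ) - 1) + ((M.numParts Y t : ℝ) - 1) + (Ioc 0 τ).indicator 1 t ≤
      (M.numParts (X ∪ Y) t : ℝ) - 1 := by
  rcases le_or_gt t τ with htτ | hτt
  · have hdisjoint : M.numParts (X ∪ Y) t = M.numParts X t + M.numParts Y t :=
      Setoid.ncard_image_mk_union _ fun x hx y hy hxy => hXY x hx y hy (M.rel_mono ht.le htτ hxy)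
    rw [indicator_of_mem (show t ∈ Ioc 0 τ from ⟨ht, htτ⟩), Pi.one_apply, hdisjoint]
    push_cast
    linarith
  · have hX_one : M.numParts X t = 1 :=
      Setoid.ncard_image_mk_eq_one _ hX fun x hx x' hx' => M.rel_mono hτ hτt.le (hXX x hx x' hx')
    have hY_le : (M.numParts Y t : ℝ) ≤ M.numParts (X ∪ Y) t := by
      exact_mod_cast M.numParts_mono subset_union_right t
    rw [indicator_of_notMem fun h => hτt.not_ge h.2, hX_one, Nat.cast_one]
    linarith

theorem localValue_add_localValue_add_le [Finite R] {τ : ℝ} (hτ : 0 ≤ τ) {X Y : Set R}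
    (hX : X.Nonempty) (hY : Y.Nonempty)
    (hXX : ∀ x ∈ X, ∀ x' ∈ X, (M.rel τ).r x x') (hXY : ∀ x ∈ X, ∀ y ∈ Y, ¬ (M.rel τ).r x y) :
    M.localValue X + M.localValue Y + τ ≤ M.localValue (X ∪ Y) := by
  have hτ_int : ∫ t in Ioi 0, (Ioc 0 τ).indicator (1 : ℝ → ℝ) t = τ := by
    rw [integral_indicator_one measurableSet_Ioc, measureReal_restrict_apply measurableSet_Ioc,
      inter_eq_self_of_subset_left Ioc_subset_Ioi_self, Real.volume_real_Ioc_of_le hτ, sub_zero]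
  have hXint := M.integrableOn_numParts_sub_one hX
  have hYint := M.integrableOn_numParts_sub_one hY
  have hτint : IntegrableOn ((Ioc 0 τ).indicator (1 : ℝ → ℝ)) (Ioi 0) :=
    (integrable_indicator_iff measurableSet_Ioc).mpr
      (integrableOn_const (C := (1 : ℝ)) measure_Ioc_lt_top.ne) |>.integrableOn
  calc M.localValue X + M.localValue Y + τ
      = ∫ t in Ioi 0, ((M.numParts X t : ℝ) - 1) + ((M.numParts Y t : ℝ) - 1) +
          (Ioc 0 τ).indicator 1 t := by
        conv_lhs => rw [← hτ_int, localValue_eq, localValue_eq]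
        rw [← integral_add hXint hYint]
        exact (integral_add (hXint.add hYint) hτint).symm
    _ ≤ M.localValue (X ∪ Y) :=
        setIntegral_mono_on ((hXint.add hYint).add hτint) (M.integrableOn_numParts_sub_one
          (hX.mono subset_union_left)) measurableSet_Ioi
          fun t ht => M.numParts_sub_one_add_le hτ hX hXX hXY ht

end MergePlan

/-- Let `M` be a merge plan on `R`, let `S` be a part of the partition
at time `t* ≥ 0`, and let `X ⊆ S` and `X̄ ⊆ R \ S` be nonempty terminal sets.  Then
`value(M, X ∪ X̄) ≥ value(M, X) + value(M, X̄) + t*`. -/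
theorem localValue_union_ge {R : Type*} [Fintype R] (M : MergePlan R)
    (tstar : ℝ) (htstar : 0 ≤ tstar)
    (S : Set R) (hS : ∃ a : R, S = {b : R | (M.rel tstar).r a b})
    (X : Set R) (hXS : X ⊆ S) (hX : X.Nonempty)
    (Y : Set R) (hYS : Y ⊆ Sᶜ) (hY : Y.Nonempty) :
    M.localValue X + M.localValue Y + tstar ≤ M.localValue (X ∪ Y) := by
  obtain ⟨a, rfl⟩ := hS
  refine M.localValue_add_localValue_add_le htstar hX hY
    (fun x hx x' hx' => ?_) fun x hx y hy hxy => ?_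
  · exact (M.rel tstar).trans ((M.rel tstar).symm (hXS hx)) (hXS hx')
  · exact hYS hy ((M.rel tstar).trans (hXS hx) hxy)
end

section
/- Let M1 and M2 be merge plans on R, X ⊆ R a nonempty terminal set, and α ≥ 0. If merge_{M1}(x,y) ≤ α · merge_{M2}(x,y) for all x,y ∈ X, then value(M1, X) ≤ α · value(M2, X). -/
/-! Fix a linear order on `R`. At every time `t > 0`, each part of `S^t` meeting `X` contains a
unique least element of `X`, so the parts are counted by the terminals `x ∈ X` that are separated
from all smaller terminals of `X`. The least terminal `x₀` always counts, and any other `x` counts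
exactly while `t ≤ m(x) := min_{y ∈ X, y < x} merge(x, y)`. Integrating,
`value(M, X) = ∑_{x ≠ x₀} m(x)`, and `m₁(x) ≤ α m₂(x)` termwise: evaluate both at a minimiser
for `M₂`. -/

open MeasureTheory Finset

open Classical in
theorem Setoid.ncard_image_mk_eq_card_filter {R : Type*} [LinearOrder R] (S : Setoid R)
    (s : Finset R) :
    (Quotient.mk S '' ↑s).ncard = #{x ∈ s | ∀ y ∈ s, y < x → ¬ S.r x y} := by
  set F := s.filter fun x => ∀ y ∈ s, y < x → ¬ S.r x y
  have hrep : Quotient.mk S '' ↑s = Quotient.mk S '' ↑F := by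
    refine subset_antisymm ?_ (Set.image_mono (Finset.coe_subset.2 (Finset.filter_subset _ _)))
    rintro _ ⟨x, hx, rfl⟩
    have hcls : (s.filter (S.r x)).Nonempty := ⟨x, Finset.mem_filter.2 ⟨hx, S.refl x⟩⟩
    obtain ⟨hzs, hxz⟩ := Finset.mem_filter.1 ((s.filter (S.r x)).min'_mem hcls)
    refine ⟨_, Finset.mem_filter.2 ⟨hzs, fun y hy hlt hzy => ?_⟩, Quotient.sound (S.symm hxz)⟩
    exact hlt.not_ge (Finset.min'_le _ _ (Finset.mem_filter.2 ⟨hy, S.trans hxz hzy⟩))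
  have hinj : Set.InjOn (Quotient.mk S) ↑F := by
    intro x hx y hy hxy
    simp only [F, Finset.coe_filter] at hx hy
    have hr : S.r x y := Quotient.exact hxy
    by_contra hne
    rcases lt_or_gt_of_ne hne with hlt | hlt
    · exact hy.2 x hx.1 hlt (S.symm hr)
    · exact hx.2 y hy.1 hlt hr
  rw [hrep, hinj.ncard_image, Set.ncard_coe_finset]

theorem integral_Ioi_indicator_Ioc_one {a : ℝ} (ha : 0 ≤ a) :
    ∫ t in Set.Ioi 0, (Set.Ioc 0 a).indicator 1 t = a := by
  rw [integral_indicator_one measurableSet_Ioc, measureReal_restrict_apply measurableSet_Ioc,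
    Set.inter_eq_self_of_subset_left Set.Ioc_subset_Ioi_self, Real.volume_real_Ioc_of_le ha,
    sub_zero]

namespace MergePlan

variable {R : Type*} [LinearOrder R]

/-- `x` is separated from every earlier terminal of `s` exactly up to this time. -/
noncomputable def attachTime (M : MergePlan R) (s : Finset R) (x : R) : ℝ :=
  sInf ↑((s.filter (· < x)).image (M.mergeTime x))

theorem le_attachTime_iff (M : MergePlan R) {s : Finset R} {x : R}
    (hx : ∃ y ∈ s, y < x) (t : ℝ) :
    t ≤ M.attachTime s x ↔ ∀ y ∈ s, y < x → t ≤ M.mergeTime x y := by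
  obtain ⟨y₀, hy₀, hlt₀⟩ := hx
  have hne : ((s.filter (· < x)).image (M.mergeTime x)).Nonempty :=
    ⟨_, Finset.mem_image_of_mem _ (Finset.mem_filter.2 ⟨hy₀, hlt₀⟩)⟩
  rw [attachTime, hne.csInf_eq_min', Finset.le_min'_iff, Finset.forall_mem_image]
  simp only [Finset.mem_filter, and_imp]

theorem attachTime_nonneg (M : MergePlan R) {s : Finset R} {x : R}
    (hx : ∃ y ∈ s, y < x) : 0 ≤ M.attachTime s x :=
  (M.le_attachTime_iff hx 0).2 fun y _ hlt => M.mergeTime_nonneg x y hlt.ne'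

theorem attachTime_le_mul (M₁ M₂ : MergePlan R) {s : Finset R} {α : ℝ}
    (h : ∀ x ∈ s, ∀ y ∈ s, x ≠ y → M₁.mergeTime x y ≤ α * M₂.mergeTime x y)
    {x : R} (hxs : x ∈ s) (hx : ∃ y ∈ s, y < x) :
    M₁.attachTime s x ≤ α * M₂.attachTime s x := by
  obtain ⟨y₀, hy₀, hlt₀⟩ := hx
  have hne : ((s.filter (· < x)).image (M₂.mergeTime x)).Nonempty :=
    ⟨_, Finset.mem_image_of_mem _ (Finset.mem_filter.2 ⟨hy₀, hlt₀⟩)⟩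
  obtain ⟨y, hy, hyx⟩ := Finset.mem_image.1 hne.csInf_mem
  obtain ⟨hys, hlt⟩ := Finset.mem_filter.1 hy
  calc M₁.attachTime s x ≤ M₁.mergeTime x y :=
        csInf_le (Finset.bddBelow _) (Finset.mem_image_of_mem _ (Finset.mem_filter.2 ⟨hys, hlt⟩))
    _ ≤ α * M₂.mergeTime x y := h x hxs y hys hlt.ne'
    _ = α * M₂.attachTime s x := by rw [attachTime, hyx]

theorem forall_lt_not_rel_iff_le_attachTime (M : MergePlan R) {s : Finset R} {x : R}
    (hx : ∃ y ∈ s, y < x) {t : ℝ} (ht : 0 < t) :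
    (∀ y ∈ s, y < x → ¬ (M.rel t).r x y) ↔ t ≤ M.attachTime s x := by
  rw [M.le_attachTime_iff hx]
  refine forall₂_congr fun y _ => imp_congr_right fun hlt => ?_
  rw [M.rel_iff t x y hlt.ne', and_iff_right ht.le]

open Classical in
theorem ncard_image_mk_sub_one (M : MergePlan R) {s : Finset R} (hs : s.Nonempty) {t : ℝ}
    (ht : 0 < t) :
    ((Quotient.mk (M.rel t) '' ↑s).ncard : ℝ) - 1
      = ∑ x ∈ s.erase (s.min' hs), (Set.Ioc 0 (M.attachTime s x)).indicator 1 t := by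
  have hmin : s.min' hs ∈ s.filter fun x => ∀ y ∈ s, y < x → ¬ (M.rel t).r x y :=
    Finset.mem_filter.2 ⟨s.min'_mem hs, fun y hy hlt => ((s.min'_le y hy).not_gt hlt).elim⟩
  rw [Setoid.ncard_image_mk_eq_card_filter, ← Finset.card_erase_add_one hmin,
    ← Finset.filter_erase, Finset.card_filter]
  push_cast
  rw [add_sub_cancel_right]
  refine Finset.sum_congr rfl fun x hx => ?_
  have hx : ∃ y ∈ s, y < x := ⟨_, s.min'_mem hs, s.min'_lt_of_mem_erase_min' hs hx⟩
  simp only [M.forall_lt_not_rel_iff_le_attachTime hx ht, Set.indicator_apply, Set.mem_Ioc, ht,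
    true_and, Pi.one_apply]

theorem localValue_eq_sum_attachTime (M : MergePlan R) {s : Finset R} (hs : s.Nonempty) :
    M.localValue ↑s = ∑ x ∈ s.erase (s.min' hs), M.attachTime s x := by
  rw [localValue, setIntegral_congr_fun measurableSet_Ioi fun t ht =>
    M.ncard_image_mk_sub_one hs ht, integral_finsetSum]
  · exact Finset.sum_congr rfl fun x hx => integral_Ioi_indicator_Ioc_one
      (M.attachTime_nonneg ⟨_, s.min'_mem hs, s.min'_lt_of_mem_erase_min' hs hx⟩)
  · exact fun x _ => (integrable_indicator_iff measurableSet_Ioc).2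
      (integrableOn_const measure_Ioc_lt_top.ne).restrict

end MergePlan

theorem localValue_le_of_mergeTime_le_general {R : Type*} [Fintype R]
    (M1 M2 : MergePlan R) (X : Set R) (hX : X.Nonempty)
    (α : ℝ)
    (h : ∀ x ∈ X, ∀ y ∈ X, x ≠ y → M1.mergeTime x y ≤ α * M2.mergeTime x y) :
    M1.localValue X ≤ α * M2.localValue X := by
  let : LinearOrder R := LinearOrder.lift' _ (Fintype.equivFin R).injective
  obtain ⟨s, rfl⟩ := X.toFinite.exists_finset_coe
  have hs : s.Nonempty := Finset.coe_nonempty.1 hX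
  rw [M1.localValue_eq_sum_attachTime hs, M2.localValue_eq_sum_attachTime hs, Finset.mul_sum]
  exact Finset.sum_le_sum fun x hx => M1.attachTime_le_mul M2 h (Finset.mem_of_mem_erase hx)
    ⟨_, s.min'_mem hs, s.min'_lt_of_mem_erase_min' hs hx⟩

/-- If `merge_{M1}(x,y) ≤ α · merge_{M2}(x,y)` for all distinct
`x, y ∈ X`, then `value(M1, X) ≤ α · value(M2, X)`. -/
theorem localValue_le_of_mergeTime_le {R : Type*} [Fintype R]
    (M1 M2 : MergePlan R) (X : Set R) (hX : X.Nonempty)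
    (α : ℝ) (hα : 0 ≤ α)
    (h : ∀ x ∈ X, ∀ y ∈ X, x ≠ y → M1.mergeTime x y ≤ α * M2.mergeTime x y) :
    M1.localValue X ≤ α * M2.localValue X :=
  localValue_le_of_mergeTime_le_general M1 M2 X hX α h
end
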